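/- arXiv:2101.05227 — 2 statements merged into one kernel-verified Lean document; each statement's English description precedes it below -/
import Mathlib

section
/- For w in the open unit disc, 0 < ε < 1, z in the closed unit disc, and k ∈ ℕ, one has |((ε·w + z)/(1 + ε·conj(w)·z))^k - z^k| ≤ 2(k+1)ε/(1 - ε). -/
open Complex ComplexConjugate

/-! The map `z ↦ (a + z) / (1 + conj a * z)` with `‖a‖ ≤ ε` sends the closed unit disc into itself
and moves each point by at most `2ε / (1 - ε)`; on the closed unit disc `u ↦ u ^ k` is
`k`-Lipschitz, since `u ^ k - z ^ k = (u - z) * ∑ uⁱ z^(k-1-i)`. -/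

theorem norm_pow_sub_pow_le_of_norm_le_one {R : Type*} [NormedCommRing R] [NormOneClass R]
    {u z : R} (hu : ‖u‖ ≤ 1) (hz : ‖z‖ ≤ 1) (k : ℕ) :
    ‖u ^ k - z ^ k‖ ≤ k * ‖u - z‖ := by
  have hpow {x : R} (hx : ‖x‖ ≤ 1) (n : ℕ) : ‖x ^ n‖ ≤ 1 :=
    (norm_pow_le x n).trans (pow_le_one₀ (norm_nonneg x) hx)
  have hsum : ‖∑ i ∈ Finset.range k, u ^ i * z ^ (k - 1 - i)‖ ≤ k := by
    simpa using norm_sum_le_of_le (Finset.range k) fun i _ =>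
      (norm_mul_le _ _).trans (mul_le_one₀ (hpow hu i) (norm_nonneg _) (hpow hz _))
  rw [← geom_sum₂_mul]
  exact (norm_mul_le _ _).trans (by gcongr)

/-- The disc automorphism sending `0` to `a`. -/
noncomputable def moebius (a z : ℂ) : ℂ := (a + z) / (1 + conj a * z)

theorem normSq_one_add_conj_mul_sub_normSq_add (a z : ℂ) :
    normSq (1 + conj a * z) - normSq (a + z) = (1 - normSq a) * (1 - normSq z) := by
  simp only [normSq_apply, add_re, add_im, mul_re, mul_im, one_re, one_im, conj_re, conj_im]
  ring

theorem norm_add_le_norm_one_add_conj_mul {a z : ℂ} (ha : ‖a‖ ≤ 1) (hz : ‖z‖ ≤ 1) :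
    ‖a + z‖ ≤ ‖1 + conj a * z‖ := by
  have ha' : normSq a ≤ 1 := by rw [normSq_eq_norm_sq]; exact pow_le_one₀ (norm_nonneg a) ha
  have hz' : normSq z ≤ 1 := by rw [normSq_eq_norm_sq]; exact pow_le_one₀ (norm_nonneg z) hz
  have hsq : normSq (a + z) ≤ normSq (1 + conj a * z) := by
    nlinarith [normSq_one_add_conj_mul_sub_normSq_add a z]
  rw [norm_def, norm_def]
  exact Real.sqrt_le_sqrt hsq

theorem norm_moebius_le_one {a z : ℂ} (ha : ‖a‖ ≤ 1) (hz : ‖z‖ ≤ 1) : ‖moebius a z‖ ≤ 1 := by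
  rw [moebius, norm_div]
  exact div_le_one_of_le₀ (norm_add_le_norm_one_add_conj_mul ha hz) (norm_nonneg _)

theorem one_sub_norm_le_norm_one_add_conj_mul (a : ℂ) {z : ℂ} (hz : ‖z‖ ≤ 1) :
    1 - ‖a‖ ≤ ‖1 + conj a * z‖ := by
  have : ‖conj a * z‖ ≤ ‖a‖ := by
    rw [norm_mul, RCLike.norm_conj]
    exact mul_le_of_le_one_right (norm_nonneg a) hz
  calc 1 - ‖a‖ ≤ ‖(1 : ℂ)‖ - ‖conj a * z‖ := by rw [norm_one]; linarith
    _ ≤ ‖1 + conj a * z‖ := norm_sub_le_norm_add _ _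

theorem moebius_sub_self {a z : ℂ} (h : 1 + conj a * z ≠ 0) :
    moebius a z - z = (a - conj a * z ^ 2) / (1 + conj a * z) := by
  rw [moebius, div_sub' h]
  ring_nf

theorem norm_moebius_sub_self_le {a z : ℂ} {r : ℝ} (ha : ‖a‖ ≤ r) (hr : r < 1) (hz : ‖z‖ ≤ 1) :
    ‖moebius a z - z‖ ≤ 2 * r / (1 - r) := by
  have hden : 1 - r ≤ ‖1 + conj a * z‖ :=
    (sub_le_sub_left ha 1).trans (one_sub_norm_le_norm_one_add_conj_mul a hz)
  have hnum : ‖a - conj a * z ^ 2‖ ≤ 2 * r := by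
    have : ‖conj a * z ^ 2‖ ≤ ‖a‖ := by
      rw [norm_mul, RCLike.norm_conj, norm_pow]
      exact mul_le_of_le_one_right (norm_nonneg a) (pow_le_one₀ (norm_nonneg z) hz)
    linarith [norm_sub_le a (conj a * z ^ 2)]
  have hpos : 0 < ‖1 + conj a * z‖ := (sub_pos.2 hr).trans_le hden
  rw [moebius_sub_self (norm_pos_iff.1 hpos), norm_div]
  exact div_le_div₀ (by linarith [norm_nonneg a]) hnum (sub_pos.2 hr) hden

theorem moebius_pow_sub_pow_bound (w : ℂ) (hw : ‖w‖ < 1) (ε : ℝ) (hε0 : 0 < ε) (hε1 : ε < 1)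
    (z : ℂ) (hz : ‖z‖ ≤ 1) (k : ℕ) :
    ‖(((ε : ℂ) * w + z) / (1 + (ε : ℂ) * (starRingEnd ℂ) w * z)) ^ k - z ^ k‖ ≤
      2 * (k + 1) * ε / (1 - ε) := by
  have hmoebius : ((ε : ℂ) * w + z) / (1 + (ε : ℂ) * (starRingEnd ℂ) w * z) =
      moebius (ε * w) z := by
    simp [moebius, mul_assoc]
  have ha : ‖(ε : ℂ) * w‖ ≤ ε := by
    rw [norm_mul, norm_real, Real.norm_of_nonneg hε0.le]
    exact mul_le_of_le_one_right hε0.le hw.le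
  rw [hmoebius]
  calc ‖moebius (ε * w) z ^ k - z ^ k‖ ≤ k * ‖moebius (ε * w) z - z‖ :=
        norm_pow_sub_pow_le_of_norm_le_one (norm_moebius_le_one (ha.trans hε1.le) hz) hz k
    _ ≤ k * (2 * ε / (1 - ε)) := by gcongr; exact norm_moebius_sub_self_le ha hε1 hz
    _ ≤ (k + 1) * (2 * ε / (1 - ε)) := by gcongr; linarith
    _ = 2 * (k + 1) * ε / (1 - ε) := by ring
end

section
/- For g holomorphic in a neighborhood of the closed unit disc, w in the open unit disc with w ≠ 0, and n ∈ ℕ, one has (1/2π)∫_0^{2π} ((w·e^{it} - 1)/(e^{it} - conj(w)))^n · g(e^{it}) dt = g(0)/conj(w)^n + res_{z=conj(w)} (((wz-1)/(z-conj(w)))^n · g(z)/z). -/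
open Complex Metric Set Real

/-!
With `c = conj w` and `Φ z = (w z - 1)^n g z`, the boundary integral is `(2πi)⁻¹ ∮_{|z|=1}` of
`Φ z / ((z - c)^n z)`. Splitting off the simple pole at `0` writes this integrand as
`Φ 0 / (-c)^n / z + K z / (z - c)^n` with `K` holomorphic on `U`, and `Φ 0 / (-c)^n = g 0 / c^n`.
The first term contributes `2πi g(0) / c^n` on the unit circle and nothing on the small circle
around `c`. The second term has the same integral over every circle enclosing `c`: writing
`K z = K c + (z - c) * dslope K c z` lowers the order of the pole by one, so by induction on `n`
this reduces to the integrals of `(z - c)^(-m)`, which are `2πi` for `m = 1` and `0` otherwise.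
-/

namespace Complex

variable {U : Set ℂ} {a b c z : ℂ} {R S : ℝ}

theorem circleIntegrable_div_sub_pow {K : ℂ → ℂ} (hR : 0 ≤ R) (hK : ContinuousOn K (sphere a R))
    (hc : c ∉ sphere a R) (n : ℕ) : CircleIntegrable (fun z => K z / (z - c) ^ n) a R :=
  ContinuousOn.circleIntegrable hR <| hK.div (by fun_prop) fun _ hz =>
    pow_ne_zero _ (sub_ne_zero.2 (ne_of_mem_of_not_mem hz hc))

theorem circleIntegral_inv_sub_pow_eq (ha : c ∈ ball a R) (hb : c ∈ ball b S) (m : ℕ) :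
    (∮ z in C(a, R), ((z - c) ^ m)⁻¹) = ∮ z in C(b, S), ((z - c) ^ m)⁻¹ := by
  rcases eq_or_ne m 1 with rfl | hm
  · simp only [pow_one, circleIntegral.integral_sub_inv_of_mem_ball ha,
      circleIntegral.integral_sub_inv_of_mem_ball hb]
  · have hm' : -(m : ℤ) ≠ -1 := by omega
    simp only [← zpow_natCast, ← zpow_neg, circleIntegral.integral_sub_zpow_of_ne hm']

theorem div_sub_pow_succ_eq (K : ℂ → ℂ) (hz : z ≠ c) (n : ℕ) :
    K z / (z - c) ^ (n + 1) = K c * ((z - c) ^ (n + 1))⁻¹ + dslope K c z / (z - c) ^ n := by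
  have hK : K z = K c + (z - c) * dslope K c z := by
    rw [← smul_eq_mul, sub_smul_dslope, add_sub_cancel]
  have hzc : z - c ≠ 0 := sub_ne_zero.2 hz
  rw [hK]
  field_simp
  ring

theorem circleIntegral_div_sub_pow_eq (hU : IsOpen U) {K : ℂ → ℂ} (hK : DifferentiableOn ℂ K U)
    (haU : closedBall a R ⊆ U) (hbU : closedBall b S ⊆ U) (ha : c ∈ ball a R)
    (hb : c ∈ ball b S) (n : ℕ) :
    (∮ z in C(a, R), K z / (z - c) ^ n) = ∮ z in C(b, S), K z / (z - c) ^ n := by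
  induction n generalizing K with
  | zero =>
    simp only [pow_zero, div_one]
    rw [(hK.diffContOnCl_ball haU).circleIntegral_eq_zero (dist_nonneg.trans ha.le),
      (hK.diffContOnCl_ball hbU).circleIntegral_eq_zero (dist_nonneg.trans hb.le)]
  | succ n ih =>
    have hK₁ : DifferentiableOn ℂ (dslope K c) U :=
      (differentiableOn_dslope (hU.mem_nhds (haU (ball_subset_closedBall ha)))).2 hK
    have hsplit : ∀ {d : ℂ} {T : ℝ}, closedBall d T ⊆ U → c ∈ ball d T →
        (∮ z in C(d, T), K z / (z - c) ^ (n + 1)) =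
          K c * (∮ z in C(d, T), ((z - c) ^ (n + 1))⁻¹) +
            ∮ z in C(d, T), dslope K c z / (z - c) ^ n := by
      intro d T hdU hd
      have hT : 0 ≤ T := dist_nonneg.trans hd.le
      have hc : c ∉ sphere d T := sphere_disjoint_ball.notMem_of_mem_right hd
      rw [circleIntegral.integral_congr hT fun z hz =>
          div_sub_pow_succ_eq K (ne_of_mem_of_not_mem hz hc) n,
        circleIntegral.integral_add, circleIntegral.integral_const_mul]
      · simpa only [div_eq_mul_inv] using
          circleIntegrable_div_sub_pow (K := fun _ => K c) hT continuousOn_const hc (n + 1)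
      · exact circleIntegrable_div_sub_pow hT
          (hK₁.continuousOn.mono (sphere_subset_closedBall.trans hdU)) hc n
    rw [hsplit haU ha, hsplit hbU hb, circleIntegral_inv_sub_pow_eq ha hb, ih hK₁]

theorem div_sub_pow_mul_eq_div_add_dslope (Φ : ℂ → ℂ) (hc : c ≠ 0) (hz0 : z ≠ 0) (hzc : z ≠ c)
    (n : ℕ) :
    Φ z / ((z - c) ^ n * z) = Φ 0 / (-c) ^ n / z +
      dslope (fun z => Φ z - Φ 0 / (-c) ^ n * (z - c) ^ n) 0 z / (z - c) ^ n := by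
  have hzc' : z - c ≠ 0 := sub_ne_zero.2 hzc
  have hc' : (-c) ^ n ≠ 0 := pow_ne_zero _ (neg_ne_zero.2 hc)
  rw [dslope_of_ne _ hz0, slope_def_field]
  field_simp
  ring

theorem circleIntegral_div_sub_pow_mul_eq {Φ : ℂ → ℂ} (hU : IsOpen U)
    (hΦ : DifferentiableOn ℂ Φ U) (h0U : (0 : ℂ) ∈ U) (hc : c ≠ 0) (hR : 0 ≤ R)
    (haU : closedBall a R ⊆ U) (h0a : (0 : ℂ) ∉ sphere a R) (hca : c ∉ sphere a R) (n : ℕ) :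
    (∮ z in C(a, R), Φ z / ((z - c) ^ n * z)) =
      Φ 0 / (-c) ^ n * (∮ z in C(a, R), z⁻¹) +
        ∮ z in C(a, R), dslope (fun z => Φ z - Φ 0 / (-c) ^ n * (z - c) ^ n) 0 z / (z - c) ^ n := by
  set K := dslope (fun z => Φ z - Φ 0 / (-c) ^ n * (z - c) ^ n) 0
  have hK : ContinuousOn K (sphere a R) :=
    ((differentiableOn_dslope (hU.mem_nhds h0U)).2 (by fun_prop)).continuousOn.mono
      (sphere_subset_closedBall.trans haU)
  have hpt : EqOn (fun z => Φ z / ((z - c) ^ n * z))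
      (fun z => Φ 0 / (-c) ^ n * z⁻¹ + K z / (z - c) ^ n) (sphere a R) := fun z hz => by
    dsimp only
    rw [← div_eq_mul_inv]
    exact div_sub_pow_mul_eq_div_add_dslope Φ hc (ne_of_mem_of_not_mem hz h0a)
      (ne_of_mem_of_not_mem hz hca) n
  rw [circleIntegral.integral_congr hR hpt, circleIntegral.integral_add,
    circleIntegral.integral_const_mul]
  · simpa only [sub_zero, pow_one, div_eq_mul_inv] using
      circleIntegrable_div_sub_pow (K := fun _ => Φ 0 / (-c) ^ n) hR continuousOn_const h0a 1
  · exact circleIntegrable_div_sub_pow hR hK hca n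

theorem intervalIntegral_exp_mul_I_eq_circleIntegral (F : ℂ → ℂ) :
    ((2 * π : ℝ) : ℂ)⁻¹ * ∫ t in (0 : ℝ)..2 * π, F (exp (t * I)) =
      (2 * π * I)⁻¹ * ∮ z in C(0, 1), F z / z := by
  have h := Real.circleAverage_eq_circleIntegral (f := F) (c := 0) one_ne_zero
  simp only [Real.circleAverage_def, circleMap_zero, ofReal_one, one_mul, sub_zero,
    smul_eq_mul] at h
  simp only [div_eq_inv_mul, ← h, real_smul, ofReal_inv]

end Complex

theorem boundary_integral_residue_general (g : ℂ → ℂ) (U : Set ℂ) (hU : IsOpen U)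
    (hsub : closedBall (0:ℂ) 1 ⊆ U) (hg : DifferentiableOn ℂ g U)
    (w : ℂ) (n : ℕ)
    (r : ℝ) (hr0 : 0 < r) (hr1 : r < ‖w‖) (hr2 : r ≤ 1 - ‖w‖) :
    ((2 * π : ℝ) : ℂ)⁻¹ *
        ∫ t in (0:ℝ)..(2 * π),
          ((w * Complex.exp (t * Complex.I) - 1) /
              (Complex.exp (t * Complex.I) - (starRingEnd ℂ) w)) ^ n *
            g (Complex.exp (t * Complex.I)) =
      g 0 / ((starRingEnd ℂ) w) ^ n +
        (2 * π * Complex.I)⁻¹ *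
          ∮ z in C((starRingEnd ℂ) w, r),
            ((w * z - 1) / (z - (starRingEnd ℂ) w)) ^ n * g z / z := by
  set c := (starRingEnd ℂ) w
  have hc : ‖c‖ = ‖w‖ := norm_conj w
  have hc0 : c ≠ 0 := norm_pos_iff.1 (by linarith)
  have hc_unit : c ∈ ball (0 : ℂ) 1 := by rw [mem_ball_zero_iff, hc]; linarith
  have hsmall : closedBall c r ⊆ closedBall 0 1 :=
    closedBall_subset_closedBall' (by rw [dist_zero_right, hc]; linarith)
  have h0_small : (0 : ℂ) ∉ closedBall c r := by
    rw [mem_closedBall, dist_comm, dist_zero_right, hc]; linarith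
  set Φ : ℂ → ℂ := fun z => (w * z - 1) ^ n * g z
  have hΦ : DifferentiableOn ℂ Φ U := by fun_prop
  have h0U : (0 : ℂ) ∈ U := hsub (mem_closedBall_self zero_le_one)
  have hK : DifferentiableOn ℂ (dslope (fun z => Φ z - Φ 0 / (-c) ^ n * (z - c) ^ n) 0) U :=
    (differentiableOn_dslope (hU.mem_nhds h0U)).2 (by fun_prop)
  have hintegrand (z : ℂ) : ((w * z - 1) / (z - c)) ^ n * g z / z = Φ z / ((z - c) ^ n * z) := by
    simp only [Φ, div_pow]
    ring
  have hres : Φ 0 / (-c) ^ n = g 0 / c ^ n := by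
    simp only [Φ, mul_zero, zero_sub, neg_pow c]
    field_simp
  have hunit : (∮ z in C(0, 1), z⁻¹) = 2 * π * I := by
    simpa using circleIntegral.integral_sub_inv_of_mem_ball (mem_ball_self (zero_lt_one' ℝ))
      (c := (0 : ℂ))
  have hsmall0 : (∮ z in C(c, r), z⁻¹) = 0 :=
    (differentiableOn_inv.mono fun _ hz => ne_of_mem_of_not_mem hz h0_small).diffContOnCl_ball
      subset_rfl |>.circleIntegral_eq_zero hr0.le
  rw [intervalIntegral_exp_mul_I_eq_circleIntegral (fun z => ((w * z - 1) / (z - c)) ^ n * g z)]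
  simp only [hintegrand]
  rw [circleIntegral_div_sub_pow_mul_eq hU hΦ h0U hc0 zero_le_one hsub (by simp)
      (sphere_disjoint_ball.notMem_of_mem_right hc_unit),
    circleIntegral_div_sub_pow_mul_eq hU hΦ h0U hc0 hr0.le (hsmall.trans hsub)
      (fun h => h0_small (sphere_subset_closedBall h))
      (sphere_disjoint_ball.notMem_of_mem_right (mem_ball_self hr0)), hunit, hsmall0,
    circleIntegral_div_sub_pow_eq hU hK hsub (hsmall.trans hsub) hc_unit (mem_ball_self hr0), hres]
  field_simp
  ring

theorem boundary_integral_residue (g : ℂ → ℂ) (U : Set ℂ) (hU : IsOpen U)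
    (hsub : closedBall (0:ℂ) 1 ⊆ U) (hg : DifferentiableOn ℂ g U)
    (w : ℂ) (hw0 : w ≠ 0) (hw : ‖w‖ < 1) (n : ℕ)
    (r : ℝ) (hr0 : 0 < r) (hr1 : r < ‖w‖) (hr2 : r ≤ 1 - ‖w‖) :
    ((2 * π : ℝ) : ℂ)⁻¹ *
        ∫ t in (0:ℝ)..(2 * π),
          ((w * Complex.exp (t * Complex.I) - 1) /
              (Complex.exp (t * Complex.I) - (starRingEnd ℂ) w)) ^ n *
            g (Complex.exp (t * Complex.I)) =
      g 0 / ((starRingEnd ℂ) w) ^ n +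
        (2 * π * Complex.I)⁻¹ *
          ∮ z in C((starRingEnd ℂ) w, r),
            ((w * z - 1) / (z - (starRingEnd ℂ) w)) ^ n * g z / z :=
  boundary_integral_residue_general g U hU hsub hg w n r hr0 hr1 hr2
end
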